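/- arXiv:1911.01679 — 2 statements merged into one kernel-verified Lean document; each statement's English description precedes it below -/
import Mathlib

section
/- Let K be a compact convex set, h convex and β-smooth on K, x ∈ K, and y = argmin_{z∈K} ∇h(x)·z. Then for any α ∈ [0,1], h((1−α)x + αy) ≤ h(x) − α(h(x) − h(x*)) + (α²β/2)‖y − x‖², where x* is a minimizer of h on K. -/
/-!
Along the segment `t ↦ x + t • d` the directional derivative `⟪∇h(x + t • d), d⟫` exceeds its
value at `t = 0` by at most `β ‖d‖² t` (Cauchy–Schwarz and the Lipschitz bound on `∇h`);
integrating gives the quadratic upper bound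
`h (x + α • d) ≤ h x + α ⟪∇h x, d⟫ + β ‖d‖² α² / 2`. For `d = y - x`, optimality of `y` for the
linear oracle and the gradient inequality of convexity give `⟪∇h x, y - x⟫ ≤ h x* - h x`.
-/

open scoped RealInnerProductSpace

section LipschitzGradient

variable {E : Type*} [NormedAddCommGroup E] [InnerProductSpace ℝ E]
  {h : E → ℝ} {gradh : E → E} {β : ℝ}

theorem inner_gradient_add_smul_sub_le
    (hsmooth : ∀ a b, ‖gradh a - gradh b‖ ≤ β * ‖a - b‖) (x d : E) {t : ℝ} (ht : 0 ≤ t) :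
    ⟪gradh (x + t • d), d⟫ - ⟪gradh x, d⟫ ≤ β * ‖d‖ ^ 2 * t :=
  calc ⟪gradh (x + t • d), d⟫ - ⟪gradh x, d⟫
      = ⟪gradh (x + t • d) - gradh x, d⟫ := (inner_sub_left _ _ _).symm
    _ ≤ ‖gradh (x + t • d) - gradh x‖ * ‖d‖ := real_inner_le_norm _ _
    _ ≤ β * ‖x + t • d - x‖ * ‖d‖ := by gcongr; exact hsmooth _ _
    _ = β * ‖d‖ ^ 2 * t := by
      rw [add_sub_cancel_left, norm_smul, Real.norm_of_nonneg ht]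
      ring

variable [CompleteSpace E]

theorem hasDerivAt_comp_add_smul (hgrad : ∀ x, HasGradientAt h (gradh x) x) (x d : E) (t : ℝ) :
    HasDerivAt (fun s : ℝ => h (x + s • d)) ⟪gradh (x + t • d), d⟫ t := by
  have hline : HasDerivAt (fun s : ℝ => x + s • d) d t := by
    simpa using ((hasDerivAt_id t).smul_const d).const_add x
  have := (hgrad (x + t • d)).hasFDerivAt.comp_hasDerivAt t hline
  rwa [InnerProductSpace.toDual_apply_apply] at this

theorem le_add_inner_gradient_add_sq_of_lipschitz_gradient
    (hgrad : ∀ x, HasGradientAt h (gradh x) x)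
    (hsmooth : ∀ a b, ‖gradh a - gradh b‖ ≤ β * ‖a - b‖) (x d : E) {α : ℝ} (hα : 0 ≤ α) :
    h (x + α • d) ≤ h x + α * ⟪gradh x, d⟫ + β * ‖d‖ ^ 2 * α ^ 2 / 2 := by
  set f : ℝ → ℝ := fun t => h (x + t • d) - h x - t * ⟪gradh x, d⟫
  set B : ℝ → ℝ := fun t => β * ‖d‖ ^ 2 * t ^ 2 / 2
  have hf : ∀ t, HasDerivAt f (⟪gradh (x + t • d), d⟫ - ⟪gradh x, d⟫) t := fun t =>
    ((hasDerivAt_comp_add_smul hgrad x d t).sub_const (h x)).sub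
      (by simpa using (hasDerivAt_id t).mul_const ⟪gradh x, d⟫)
  have hB : ∀ t, HasDerivAt B (β * ‖d‖ ^ 2 * t) t := fun t =>
    (((hasDerivAt_pow 2 t).const_mul (β * ‖d‖ ^ 2)).div_const 2).congr_deriv (by norm_num; ring)
  have hfB : f α ≤ B α :=
    image_le_of_deriv_right_le_deriv_boundary
      (fun t _ => (hf t).continuousAt.continuousWithinAt)
      (fun t _ => (hf t).hasDerivWithinAt)
      (by simp [f, B])
      (fun t _ => (hB t).continuousAt.continuousWithinAt)
      (fun t _ => (hB t).hasDerivWithinAt)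
      (fun t ht => inner_gradient_add_smul_sub_le hsmooth x d ht.1)
      ⟨hα, le_rfl⟩
  simp only [f, B] at hfB
  linarith

end LipschitzGradient

theorem stmt_4_general (k : ℕ) (K : Set (EuclideanSpace ℝ (Fin k)))
    (β : ℝ)
    (h : EuclideanSpace ℝ (Fin k) → ℝ)
    (gradh : EuclideanSpace ℝ (Fin k) → EuclideanSpace ℝ (Fin k))
    (hgrad : ∀ x, HasGradientAt h (gradh x) x)
    (hconv : ∀ a b : EuclideanSpace ℝ (Fin k), h a + ⟪gradh a, b - a⟫ ≤ h b)
    (hsmooth : ∀ a b : EuclideanSpace ℝ (Fin k), ‖gradh a - gradh b‖ ≤ β * ‖a - b‖)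
    (x : EuclideanSpace ℝ (Fin k))
    (y : EuclideanSpace ℝ (Fin k))
    (hyopt : ∀ z ∈ K, ⟪gradh x, y⟫ ≤ ⟪gradh x, z⟫)
    (xstar : EuclideanSpace ℝ (Fin k)) (hxstar : xstar ∈ K) :
    ∀ α : ℝ, α ∈ Set.Icc (0 : ℝ) 1 →
      h ((1 - α) • x + α • y) ≤
        h x - α * (h x - h xstar) + α ^ 2 * β / 2 * ‖y - x‖ ^ 2 := by
  rintro α ⟨hα₀, -⟩
  have hgap : ⟪gradh x, y - x⟫ ≤ h xstar - h x :=
    calc ⟪gradh x, y - x⟫ ≤ ⟪gradh x, xstar - x⟫ := by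
          simpa only [inner_sub_right, sub_le_sub_iff_right] using hyopt xstar hxstar
      _ ≤ h xstar - h x := by linarith [hconv x xstar]
  calc h ((1 - α) • x + α • y) = h (x + α • (y - x)) := by congr 1; module
    _ ≤ h x + α * ⟪gradh x, y - x⟫ + β * ‖y - x‖ ^ 2 * α ^ 2 / 2 :=
        le_add_inner_gradient_add_sq_of_lipschitz_gradient hgrad hsmooth x (y - x) hα₀
    _ ≤ h x - α * (h x - h xstar) + α ^ 2 * β / 2 * ‖y - x‖ ^ 2 := by
        nlinarith [mul_le_mul_of_nonneg_left hgap hα₀]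

/-- per-iteration Frank–Wolfe descent lemma:
h((1−α)x + αy) ≤ h(x) − α(h(x) − h(x*)) + (α²β/2)‖y − x‖². -/
theorem stmt_4 (k : ℕ) (K : Set (EuclideanSpace ℝ (Fin k)))
    (hKc : IsCompact K) (hK : Convex ℝ K) (β : ℝ)
    (h : EuclideanSpace ℝ (Fin k) → ℝ)
    (gradh : EuclideanSpace ℝ (Fin k) → EuclideanSpace ℝ (Fin k))
    (hgrad : ∀ x, HasGradientAt h (gradh x) x)
    (hconv : ∀ a b : EuclideanSpace ℝ (Fin k), h a + ⟪gradh a, b - a⟫ ≤ h b)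
    (hsmooth : ∀ a b : EuclideanSpace ℝ (Fin k), ‖gradh a - gradh b‖ ≤ β * ‖a - b‖)
    (x : EuclideanSpace ℝ (Fin k)) (hx : x ∈ K)
    (y : EuclideanSpace ℝ (Fin k)) (hy : y ∈ K)
    (hyopt : ∀ z ∈ K, ⟪gradh x, y⟫ ≤ ⟪gradh x, z⟫)
    (xstar : EuclideanSpace ℝ (Fin k)) (hxstar : xstar ∈ K)
    (hxstaropt : ∀ z ∈ K, h xstar ≤ h z) :
    ∀ α : ℝ, α ∈ Set.Icc (0 : ℝ) 1 →
      h ((1 - α) • x + α • y) ≤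
        h x - α * (h x - h xstar) + α ^ 2 * β / 2 * ‖y - x‖ ^ 2 :=
  stmt_4_general k K β h gradh hgrad hconv hsmooth x y hyopt xstar hxstar
end

section
/- Suppose a no-regret procedure produces w₁,…,w_T in W and policies π₁,…,π_T with π_t best response to w_t (i.e., w_t·Φ(π_t) = max_{π∈Π} w_t·Φ(π)), and the regret bound (1/T)Σ_t w_t·(Φ(π_t) − Φ_E) ≤ min_{w∈W} (1/T)Σ_t w·(Φ(π_t) − Φ_E) + R_T holds. Then the uniform mixture ψ with Φ(ψ) = (1/T)Σ_t Φ(π_t) satisfies min_{w∈W} w·(Φ(ψ) − Φ_E) ≥ f* − R_T, where f* = max_{ψ'∈Ψ} min_{w∈W} w·(Φ(ψ') − Φ_E). -/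
/-!
For every mixed policy `ψ` and every round `t`,
`min_{w ∈ W} ⟪w, Φ(ψ) - Φ_E⟫ ≤ ⟪w_t, Φ(ψ) - Φ_E⟫ ≤ ⟪w_t, Φ(π_t) - Φ_E⟫`, the second step because
`π_t` is a best response to `w_t`. Averaging over `t` bounds `f*` by the reward player's average
payoff; as the payoff is linear in the features, the regret bound says this average is at most
`min_{w ∈ W} ⟪w, Φ(ψ) - Φ_E⟫ + R_T` for the uniform mixture `ψ`. No minimax theorem is needed.
-/

open scoped RealInnerProductSpace

section

variable {E : Type*} [NormedAddCommGroup E] [InnerProductSpace ℝ E]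

theorem inner_sum_smul_le_of_forall_inner_le {P : Type*} [Fintype P] {Φ : P → E} {v : E}
    {q : P} (hq : ∀ p, ⟪v, Φ p⟫ ≤ ⟪v, Φ q⟫) {ψ : P → ℝ} (hψ : ψ ∈ stdSimplex ℝ P) :
    ⟪v, ∑ p, ψ p • Φ p⟫ ≤ ⟪v, Φ q⟫ :=
  calc ⟪v, ∑ p, ψ p • Φ p⟫ = ∑ p, ψ p * ⟪v, Φ p⟫ := by
        simp only [inner_sum, real_inner_smul_right]
    _ ≤ ∑ p, ψ p * ⟪v, Φ q⟫ :=
        Finset.sum_le_sum fun p _ => mul_le_mul_of_nonneg_left (hq p) (hψ.1 p)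
    _ = ⟪v, Φ q⟫ := by rw [← Finset.sum_mul, hψ.2, one_mul]

theorem IsCompact.sInf_image_inner_le {W : Set E} (hW : IsCompact W) (x : E) {v : E}
    (hv : v ∈ W) : sInf ((fun w => ⟪w, x⟫) '' W) ≤ ⟪v, x⟫ :=
  csInf_le (hW.image (continuous_id.inner continuous_const)).bddBelow ⟨v, hv, rfl⟩

theorem inner_average_sub {T : ℕ} (hT : 0 < T) (x : Fin T → E) (y v : E) :
    (1 / (T : ℝ)) * ∑ t, ⟪v, x t - y⟫ = ⟪v, (1 / (T : ℝ)) • ∑ t, x t - y⟫ := by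
  have hT' : (T : ℝ) ≠ 0 := Nat.cast_ne_zero.mpr hT.ne'
  simp only [inner_sub_right, real_inner_smul_right, inner_sum, Finset.sum_sub_distrib,
    Finset.sum_const, Finset.card_univ, Fintype.card_fin, nsmul_eq_mul]
  field_simp

end

theorem le_average_of_forall_le {T : ℕ} (hT : 0 < T) {a : Fin T → ℝ} {c : ℝ}
    (h : ∀ t, c ≤ a t) : c ≤ (1 / (T : ℝ)) * ∑ t, a t := by
  have hsum : (T : ℝ) * c ≤ ∑ t, a t := by
    simpa using Finset.univ.card_nsmul_le_sum a c fun t _ => h t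
  rw [one_div_mul_eq_div, le_div_iff₀ (Nat.cast_pos.mpr hT)]
  linarith

theorem sSup_sInf_le_average_of_isBestResponse {E P : Type*} [NormedAddCommGroup E]
    [InnerProductSpace ℝ E] [Fintype P] {Φ : P → E} {ΦE : E} {W : Set E} (hWc : IsCompact W)
    {T : ℕ} (hT : 0 < T) {w : Fin T → E} (hw : ∀ t, w t ∈ W) {π : Fin T → P}
    (hbest : ∀ t p, ⟪w t, Φ p⟫ ≤ ⟪w t, Φ (π t)⟫) :
    sSup ((fun ψ : P → ℝ => sInf ((fun w' => ⟪w', (∑ p, ψ p • Φ p) - ΦE⟫) '' W)) ''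
        stdSimplex ℝ P) ≤ (1 / (T : ℝ)) * ∑ t, ⟪w t, Φ (π t) - ΦE⟫ := by
  classical
  refine csSup_le ⟨_, _, single_mem_stdSimplex ℝ (π ⟨0, hT⟩), rfl⟩ ?_
  rintro _ ⟨ψ, hψ, rfl⟩
  refine le_average_of_forall_le hT fun t => ?_
  calc sInf ((fun w' => ⟪w', (∑ p, ψ p • Φ p) - ΦE⟫) '' W)
      ≤ ⟪w t, (∑ p, ψ p • Φ p) - ΦE⟫ := hWc.sInf_image_inner_le _ (hw t)
    _ ≤ ⟪w t, Φ (π t) - ΦE⟫ := by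
      simp only [inner_sub_right]
      linarith [inner_sum_smul_le_of_forall_inner_le (hbest t) hψ]

theorem stmt_19_general (k : ℕ) (P : Type) [Fintype P]
    (Φ : P → EuclideanSpace ℝ (Fin k)) (ΦE : EuclideanSpace ℝ (Fin k))
    (W : Set (EuclideanSpace ℝ (Fin k)))
    (hWc : IsCompact W)
    (T : ℕ) (hT : 0 < T)
    (w : Fin T → EuclideanSpace ℝ (Fin k)) (hw : ∀ t, w t ∈ W)
    (π : Fin T → P)
    (hbest : ∀ t : Fin T, ∀ p : P, ⟪w t, Φ p⟫ ≤ ⟪w t, Φ (π t)⟫)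
    (R : ℝ)
    (hregret : (1 / (T : ℝ)) * ∑ t, ⟪w t, Φ (π t) - ΦE⟫ ≤
        sInf ((fun w' : EuclideanSpace ℝ (Fin k) =>
          (1 / (T : ℝ)) * ∑ t, ⟪w', Φ (π t) - ΦE⟫) '' W) + R)
    (Φψ : EuclideanSpace ℝ (Fin k))
    (hΦψ : Φψ = (1 / (T : ℝ)) • ∑ t, Φ (π t))
    (fstar : ℝ)
    (hfstar : fstar = sSup ((fun ψ : P → ℝ =>
        sInf ((fun w' : EuclideanSpace ℝ (Fin k) =>
          ⟪w', (∑ p, ψ p • Φ p) - ΦE⟫) '' W)) '' stdSimplex ℝ P)) :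
    fstar - R ≤ sInf ((fun w' : EuclideanSpace ℝ (Fin k) => ⟪w', Φψ - ΦE⟫) '' W) := by
  have hvalue := sSup_sInf_le_average_of_isBestResponse (ΦE := ΦE) hWc hT hw hbest
  simp only [inner_average_sub hT, ← hΦψ] at hregret
  linarith

/-- a no-regret reward player against best-response policies yields an
ε-optimal mixed policy: the uniform mixture ψ with Φ(ψ) = (1/T)Σ_t Φ(π_t) satisfies
min_{w∈W} w·(Φ(ψ) − Φ_E) ≥ f* − R_T. -/
theorem stmt_19 (k : ℕ) (P : Type) [Fintype P] [Nonempty P]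
    (Φ : P → EuclideanSpace ℝ (Fin k)) (ΦE : EuclideanSpace ℝ (Fin k))
    (W : Set (EuclideanSpace ℝ (Fin k)))
    (hWne : W.Nonempty) (hWc : IsCompact W) (hW : Convex ℝ W)
    (T : ℕ) (hT : 0 < T)
    (w : Fin T → EuclideanSpace ℝ (Fin k)) (hw : ∀ t, w t ∈ W)
    (π : Fin T → P)
    (hbest : ∀ t : Fin T, ∀ p : P, ⟪w t, Φ p⟫ ≤ ⟪w t, Φ (π t)⟫)
    (R : ℝ)
    (hregret : (1 / (T : ℝ)) * ∑ t, ⟪w t, Φ (π t) - ΦE⟫ ≤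
        sInf ((fun w' : EuclideanSpace ℝ (Fin k) =>
          (1 / (T : ℝ)) * ∑ t, ⟪w', Φ (π t) - ΦE⟫) '' W) + R)
    (Φψ : EuclideanSpace ℝ (Fin k))
    (hΦψ : Φψ = (1 / (T : ℝ)) • ∑ t, Φ (π t))
    (fstar : ℝ)
    (hfstar : fstar = sSup ((fun ψ : P → ℝ =>
        sInf ((fun w' : EuclideanSpace ℝ (Fin k) =>
          ⟪w', (∑ p, ψ p • Φ p) - ΦE⟫) '' W)) '' stdSimplex ℝ P)) :
    fstar - R ≤ sInf ((fun w' : EuclideanSpace ℝ (Fin k) => ⟪w', Φψ - ΦE⟫) '' W) :=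
  stmt_19_general k P Φ ΦE W hWc T hT w hw π hbest R hregret Φψ hΦψ fstar hfstar
end
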